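/- arXiv:1404.5039 — 2 statements merged into one kernel-verified Lean document; each statement's English description precedes it below -/
import Mathlib

section
/- Let d ≥ 1 be an integer and let α be a real number with 1 < α < 1 + 4/d. Then there exist a real number p > 2 and, for every ε > 0, a finite constant C_ε such that for every smooth compactly supported function u : ℝ^d → ℂ, ∫_{ℝ^d} |u(ξ)|^{α+1} dξ ≤ C_ε (∫_{ℝ^d} |u(ξ)|² dξ)^{p/2} + ε ∫_{ℝ^d} |∇u(ξ)|² dξ. -/
open MeasureTheory
open scoped ENNReal NNReal

set_option linter.unusedSectionVars false
set_option maxHeartbeats 1000000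

section helpers

lemma young_aux {β a K ε : ℝ} (hβ0 : 0 < β) (hβ2 : β < 2) (hK : 0 ≤ K) (hε : 0 < ε) :
    ∃ C : ℝ, 0 ≤ C ∧ ∀ X Y : ℝ, 0 ≤ X → 0 ≤ Y →
      K * X ^ (a/2) * Y ^ (β/2) ≤ C * X ^ (a/(2-β)) + ε * Y := by
  have h2β : 0 < 2 - β := by linarith
  set q : ℝ := 2/β with hqdef
  set q' : ℝ := 2/(2-β) with hq'def
  have hq1 : 1 < q' := by rw [hq'def, lt_div_iff₀ h2β]; linarith
  have hq : Real.HolderConjugate q' q := Real.holderConjugate_iff.mpr ⟨hq1, by rw [hqdef, hq'def]; field_simp; ring⟩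
  have hqpos : 0 < q := by positivity
  set c₂ : ℝ := (q*ε) ^ (1/q) with hc₂def
  have hc₂ : 0 < c₂ := by positivity
  refine ⟨(K/c₂)^q' / q', by positivity, fun X Y hX hY => ?_⟩
  have key := Real.young_inequality (K/c₂ * X^(a/2)) (c₂ * Y^(β/2)) hq
  have e1 : K/c₂ * X^(a/2) * (c₂ * Y^(β/2)) = K * X ^ (a/2) * Y ^ (β/2) := by
    field_simp
  rw [e1] at key
  have hx1 : (0:ℝ) ≤ K/c₂ * X^(a/2) := by positivity
  have hy1 : (0:ℝ) ≤ c₂ * Y^(β/2) := by positivity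
  rw [abs_of_nonneg hx1, abs_of_nonneg hy1] at key
  have e2 : (K/c₂ * X^(a/2))^q' = (K/c₂)^q' * X^(a/(2-β)) := by
    rw [Real.mul_rpow (by positivity) (by positivity), ← Real.rpow_mul hX]
    congr 1
    rw [hq'def]; field_simp
  have e3 : (c₂ * Y^(β/2))^q / q = ε * Y := by
    rw [Real.mul_rpow hc₂.le (by positivity), ← Real.rpow_mul hY, hc₂def,
      ← Real.rpow_mul (by positivity)]
    rw [one_div, inv_mul_cancel₀ hqpos.ne', Real.rpow_one]
    have : β/2*q = 1 := by rw [hqdef]; field_simp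
    rw [this, Real.rpow_one]
    field_simp
  rw [e2, e3] at key
  calc K * X ^ (a/2) * Y ^ (β/2) ≤ (K/c₂)^q' * X^(a/(2-β)) / q' + ε * Y := key
    _ = (K/c₂)^q'/q' * X^(a/(2-β)) + ε * Y := by ring

variable {E : Type*} [NormedAddCommGroup E] [NormedSpace ℝ E]

lemma normSq_eq (u : E → ℂ) : (fun y => ‖u y‖^2) = fun y => (u y).re^2 + (u y).im^2 := by
  funext y
  rw [Complex.sq_norm, Complex.normSq_apply]; ring

lemma normSq_contDiff {u : E → ℂ} (hu : ContDiff ℝ 1 u) :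
    ContDiff ℝ 1 (fun x => ‖u x‖^2) := (contDiff_norm_sq ℂ).comp hu

lemma normSq_hcs {u : E → ℂ} (h2u : HasCompactSupport u) :
    HasCompactSupport (fun x => ‖u x‖^2) :=
  HasCompactSupport.comp_left (g := fun z : ℂ => ‖z‖^2) h2u (by norm_num)

lemma normSq_fderiv_bound {u : E → ℂ} (hu : ContDiff ℝ 1 u) (x : E) :
    ‖fderiv ℝ (fun y => ‖u y‖^2) x‖ ≤ 4 * ‖u x‖ * ‖fderiv ℝ u x‖ := by
  have hD : HasFDerivAt u (fderiv ℝ u x) x := (hu.differentiable one_ne_zero x).hasFDerivAt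
  set D := fderiv ℝ u x with hDdef
  have hre : HasFDerivAt (fun y => (u y).re) (Complex.reCLM.comp D) x :=
    Complex.reCLM.hasFDerivAt.comp x hD
  have him : HasFDerivAt (fun y => (u y).im) (Complex.imCLM.comp D) x :=
    Complex.imCLM.hasFDerivAt.comp x hD
  have h1 : HasFDerivAt (fun y => (u y).re * (u y).re)
      ((u x).re • (Complex.reCLM.comp D) + (u x).re • (Complex.reCLM.comp D)) x := hre.mul hre
  have h2 : HasFDerivAt (fun y => (u y).im * (u y).im)
      ((u x).im • (Complex.imCLM.comp D) + (u x).im • (Complex.imCLM.comp D)) x := him.mul him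
  have hv : HasFDerivAt (fun y => ‖u y‖^2)
      (((u x).re • (Complex.reCLM.comp D) + (u x).re • (Complex.reCLM.comp D)) +
       ((u x).im • (Complex.imCLM.comp D) + (u x).im • (Complex.imCLM.comp D))) x := by
    rw [normSq_eq u]
    simp only [sq]
    exact h1.add h2
  rw [hv.fderiv]
  have hreD : ‖Complex.reCLM.comp D‖ ≤ ‖D‖ := by
    refine ContinuousLinearMap.opNorm_le_bound _ (norm_nonneg D) fun y => ?_
    calc ‖(Complex.reCLM.comp D) y‖ = |(D y).re| := rfl
      _ ≤ ‖D y‖ := Complex.abs_re_le_norm _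
      _ ≤ ‖D‖ * ‖y‖ := D.le_opNorm y
  have himD : ‖Complex.imCLM.comp D‖ ≤ ‖D‖ := by
    refine ContinuousLinearMap.opNorm_le_bound _ (norm_nonneg D) fun y => ?_
    calc ‖(Complex.imCLM.comp D) y‖ = |(D y).im| := rfl
      _ ≤ ‖D y‖ := Complex.abs_im_le_norm _
      _ ≤ ‖D‖ * ‖y‖ := D.le_opNorm y
  have hre' : |(u x).re| ≤ ‖u x‖ := Complex.abs_re_le_norm _
  have him' : |(u x).im| ≤ ‖u x‖ := Complex.abs_im_le_norm _
  have hsm1 : ‖(u x).re • (Complex.reCLM.comp D)‖ ≤ ‖u x‖ * ‖D‖ := by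
    refine (ContinuousLinearMap.opNorm_smul_le _ _).trans ?_
    simp only [Real.norm_eq_abs]
    exact mul_le_mul hre' hreD (norm_nonneg _) (norm_nonneg _)
  have hsm2 : ‖(u x).im • (Complex.imCLM.comp D)‖ ≤ ‖u x‖ * ‖D‖ := by
    refine (ContinuousLinearMap.opNorm_smul_le _ _).trans ?_
    simp only [Real.norm_eq_abs]
    exact mul_le_mul him' himD (norm_nonneg _) (norm_nonneg _)
  calc ‖_ + _‖ ≤ ‖(u x).re • (Complex.reCLM.comp D) + (u x).re • (Complex.reCLM.comp D)‖
        + ‖(u x).im • (Complex.imCLM.comp D) + (u x).im • (Complex.imCLM.comp D)‖ := norm_add_le _ _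
    _ ≤ (‖(u x).re • (Complex.reCLM.comp D)‖ + ‖(u x).re • (Complex.reCLM.comp D)‖)
        + (‖(u x).im • (Complex.imCLM.comp D)‖ + ‖(u x).im • (Complex.imCLM.comp D)‖) := by
        gcongr <;> exact norm_add_le _ _
    _ ≤ (‖u x‖ * ‖D‖ + ‖u x‖ * ‖D‖) + (‖u x‖ * ‖D‖ + ‖u x‖ * ‖D‖) := by gcongr
    _ = 4 * ‖u x‖ * ‖D‖ := by ring

end helpers

lemma euclid_decomp {d : ℕ} (x : EuclideanSpace ℝ (Fin d)) :
    x = ∑ k : Fin d, x k • EuclideanSpace.single k 1 := by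
  conv_lhs => rw [← (EuclideanSpace.basisFun (Fin d) ℝ).sum_repr x]
  refine Finset.sum_congr rfl fun k _ => ?_
  rw [EuclideanSpace.basisFun_repr]
  congr 1
  simp [EuclideanSpace.basisFun]
  rfl

lemma opnorm_sq_le {d : ℕ} (T : EuclideanSpace ℝ (Fin d) →L[ℝ] ℂ) :
    ‖T‖^2 ≤ ∑ k : Fin d, ‖T (EuclideanSpace.single k 1)‖^2 := by
  set S := ∑ k : Fin d, ‖T (EuclideanSpace.single k 1)‖^2 with hS
  have hS0 : 0 ≤ S := Finset.sum_nonneg fun k _ => by positivity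
  have hT : ‖T‖ ≤ Real.sqrt S := by
    refine ContinuousLinearMap.opNorm_le_bound _ (Real.sqrt_nonneg _) fun x => ?_
    have key : ∑ k : Fin d, |x k| * ‖T (EuclideanSpace.single k 1)‖
        ≤ Real.sqrt (∑ k : Fin d, |x k|^2) * Real.sqrt S := by
      rw [← Real.sqrt_mul (by positivity)]
      rw [Real.le_sqrt (by positivity) (by positivity)]
      exact Finset.sum_mul_sq_le_sq_mul_sq _ _ _
    calc ‖T x‖ = ‖∑ k : Fin d, x k • T (EuclideanSpace.single k 1)‖ := by
          conv_lhs => rw [euclid_decomp x]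
          rw [map_sum]
          simp
      _ ≤ ∑ k : Fin d, ‖x k • T (EuclideanSpace.single k 1)‖ := norm_sum_le _ _
      _ = ∑ k : Fin d, |x k| * ‖T (EuclideanSpace.single k 1)‖ := by
          simp [norm_smul, Real.norm_eq_abs]
      _ ≤ Real.sqrt (∑ k : Fin d, |x k|^2) * Real.sqrt S := key
      _ = Real.sqrt S * ‖x‖ := by
          rw [EuclideanSpace.norm_eq x]
          simp only [Real.norm_eq_abs]
          ring
  calc ‖T‖^2 ≤ Real.sqrt S ^ 2 := by
        nlinarith [Real.sqrt_nonneg S, norm_nonneg T]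
    _ = S := Real.sq_sqrt hS0

-- core inequality, case d ≥ 3
lemma core3 (d : ℕ) (hd : 3 ≤ d) (α : ℝ) (hα : 1 < α) (hα' : α < 1 + 4 / (d:ℝ)) :
    ∃ K : ℝ≥0∞, K ≠ ⊤ ∧ ∀ u : EuclideanSpace ℝ (Fin d) → ℂ,
      ContDiff ℝ 1 u → HasCompactSupport u →
      ∫⁻ ξ, (‖u ξ‖₊ : ℝ≥0∞)^(α+1)
        ≤ K * (∫⁻ ξ, (‖u ξ‖₊:ℝ≥0∞)^(2:ℝ))^((α+1-(d*(α-1)/2))/2)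
            * (∫⁻ ξ, (‖fderiv ℝ u ξ‖₊:ℝ≥0∞)^(2:ℝ))^((d*(α-1)/2)/2) := by
  have hn2 : (0:ℝ) < (d:ℝ) - 2 := by
    have : (3:ℝ) ≤ d := by exact_mod_cast hd
    linarith
  have hn0 : (0:ℝ) < d := by linarith
  set n : ℝ := (d:ℝ) with hndef
  set β : ℝ := d*(α-1)/2 with hβdef
  set s : ℝ := 2*n/(n-2) with hsdef
  have hs2 : 2 < s := by
    rw [hsdef, lt_div_iff₀ hn2]; linarith
  have hsα : α + 1 < s := by
    have h1 : α - 1 < 4/n := by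
      have := hα'
      linarith
    have h2 : (4:ℝ)/n < 4/(n-2) := by
      apply div_lt_div_of_pos_left (by norm_num) hn2 (by linarith)
    have h3 : s - 2 = 4/(n-2) := by rw [hsdef]; field_simp; ring
    linarith
  set θ : ℝ := (α-1)/(s-2) with hθdef
  have hθ0 : 0 < θ := by apply div_pos <;> linarith
  have hθ1 : θ < 1 := by rw [hθdef, div_lt_one (by linarith)]; linarith
  -- identities
  have hid1 : s * θ = β := by
    rw [hθdef, hβdef, hsdef]
    have h3 : 2*n/(n-2) - 2 = 4/(n-2) := by field_simp; ring
    rw [h3]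
    field_simp
    ring
  have hid2 : 1 - θ = (α+1-β)/2 := by
    rw [hθdef, hβdef]
    have h3 : s - 2 = 4/(n-2) := by rw [hsdef]; field_simp; ring
    rw [h3]
    field_simp
    ring
  -- NNReal exponent p'
  have hd0 : (d:ℝ≥0) ≠ 0 := by positivity
  set p' : ℝ≥0 := 2*(d:ℝ≥0)/((d:ℝ≥0)-2) with hp'def
  have hcast : ((d:ℝ≥0) : ℝ) = n := by simp [hndef]
  have h2led : (2:ℝ≥0) ≤ (d:ℝ≥0) := by
    have : (2:ℝ) ≤ ((d:ℝ≥0):ℝ) := by rw [hcast]; linarith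
    exact_mod_cast this
  have hp'coe : (p' : ℝ) = s := by
    rw [hp'def, hsdef]
    push_cast [NNReal.coe_sub h2led]
    rfl
  have hp'0 : p' ≠ 0 := by
    have : (0:ℝ) < (p':ℝ) := by rw [hp'coe]; linarith
    exact_mod_cast this.ne'
  have hp'inv : ((p':ℝ))⁻¹ = ((2:ℝ≥0):ℝ)⁻¹ - ((Module.finrank ℝ (EuclideanSpace ℝ (Fin d)) : ℝ))⁻¹ := by
    rw [hp'coe, hsdef, finrank_euclideanSpace_fin]
    push_cast
    rw [← hndef]
    field_simp
  set C : ℝ≥0 := SNormLESNormFDerivOfEqConst ℂ (volume : Measure (EuclideanSpace ℝ (Fin d))) 2 with hCdef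
  refine ⟨(C:ℝ≥0∞)^(s*θ), ENNReal.rpow_ne_top_of_nonneg (by positivity) ENNReal.coe_ne_top,
    fun u hu h2u => ?_⟩
  set A' : ℝ≥0∞ := ∫⁻ ξ, (‖u ξ‖₊:ℝ≥0∞)^(2:ℝ) with hA'def
  set G' : ℝ≥0∞ := ∫⁻ ξ, (‖fderiv ℝ u ξ‖₊:ℝ≥0∞)^(2:ℝ) with hG'def
  have hmu : Measurable u := hu.continuous.measurable
  have hmDu : Measurable (fderiv ℝ u) := (hu.continuous_fderiv one_ne_zero).measurable
  -- Sobolev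
  have hSob : eLpNorm u p' volume ≤ (C:ℝ≥0∞) * eLpNorm (fderiv ℝ u) 2 volume := by
    have := eLpNorm_le_eLpNorm_fderiv_of_eq (volume : Measure (EuclideanSpace ℝ (Fin d)))
      hu h2u (p := 2) (p' := p') (by norm_num)
      (by rw [finrank_euclideanSpace_fin]; omega) (by exact_mod_cast hp'inv)
    simpa using this
  -- J_s ≤ C^s * G'^(s/2)
  have hG2 : eLpNorm (fderiv ℝ u) 2 volume ^ (2:ℝ) = G' := by
    have h := eLpNorm_nnreal_pow_eq_lintegral (f := fderiv ℝ u) (μ := volume) (p := 2) (by norm_num)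
    rw [hG'def]
    convert h using 3 <;> norm_num <;> rfl
  have hJs : ∫⁻ ξ, (‖u ξ‖₊:ℝ≥0∞)^s ≤ (C:ℝ≥0∞)^s * G'^(s/2) := by
    have h1 : eLpNorm u p' volume ^ (p':ℝ) = ∫⁻ ξ, (‖u ξ‖₊:ℝ≥0∞)^((p':ℝ)) :=
      eLpNorm_nnreal_pow_eq_lintegral hp'0
    rw [hp'coe] at h1
    rw [← h1]
    calc eLpNorm u (↑p') volume ^ s ≤ ((C:ℝ≥0∞) * eLpNorm (fderiv ℝ u) 2 volume) ^ s :=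
          ENNReal.rpow_le_rpow hSob (by linarith)
      _ = (C:ℝ≥0∞)^s * (eLpNorm (fderiv ℝ u) 2 volume)^s := ENNReal.mul_rpow_of_nonneg _ _ (by linarith)
      _ = (C:ℝ≥0∞)^s * G'^(s/2) := by
          rw [← hG2, ← ENNReal.rpow_mul]
          congr 1
          ring
  -- Hölder interpolation
  have hconj : Real.HolderConjugate (1/(1-θ)) (1/θ) := by
    rw [Real.holderConjugate_iff]; constructor
    · rw [lt_div_iff₀ (by linarith)]; linarith
    · simp only [one_div, inv_inv]; ring
  have hHolder : ∫⁻ ξ, (‖u ξ‖₊ : ℝ≥0∞)^(α+1)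
      ≤ A'^(1-θ) * (∫⁻ ξ, (‖u ξ‖₊:ℝ≥0∞)^s)^θ := by
    have hsplit : ∀ ξ, (‖u ξ‖₊ : ℝ≥0∞)^(α+1)
        = ((fun ξ => (‖u ξ‖₊:ℝ≥0∞)^(2*(1-θ))) * (fun ξ => (‖u ξ‖₊:ℝ≥0∞)^(s*θ))) ξ := by
      intro ξ
      simp only [Pi.mul_apply]
      rw [← ENNReal.rpow_add_of_nonneg _ _ (by nlinarith) (by nlinarith)]
      congr 1
      rw [hid1, hid2, hβdef]
      ring
    rw [lintegral_congr hsplit]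
    have hH := ENNReal.lintegral_mul_le_Lp_mul_Lq (volume : Measure (EuclideanSpace ℝ (Fin d)))
      hconj (f := fun ξ => (‖u ξ‖₊:ℝ≥0∞)^(2*(1-θ))) (g := fun ξ => (‖u ξ‖₊:ℝ≥0∞)^(s*θ))
      (by exact (hmu.nnnorm.coe_nnreal_ennreal.pow_const _).aemeasurable)
      (by exact (hmu.nnnorm.coe_nnreal_ennreal.pow_const _).aemeasurable)
    have h1θ : (1:ℝ) - θ ≠ 0 := by linarith
    have hθne : θ ≠ 0 := hθ0.ne'
    have e1 : (∫⁻ a : EuclideanSpace ℝ (Fin d),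
        (fun ξ => (‖u ξ‖₊:ℝ≥0∞)^(2*(1-θ))) a ^ (1/(1-θ))) = A' := by
      have hexp : 2*(1-θ)*(1/(1-θ)) = 2 := by field_simp
      rw [hA'def]
      apply lintegral_congr; intro ξ
      rw [← ENNReal.rpow_mul, hexp]
    have e2 : (∫⁻ a : EuclideanSpace ℝ (Fin d),
        (fun ξ => (‖u ξ‖₊:ℝ≥0∞)^(s*θ)) a ^ (1/θ)) = ∫⁻ ξ, (‖u ξ‖₊:ℝ≥0∞)^s := by
      have hexp : s*θ*(1/θ) = s := by field_simp
      apply lintegral_congr; intro ξ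
      rw [← ENNReal.rpow_mul, hexp]
    rw [e1, e2, one_div_one_div, one_div_one_div] at hH
    exact hH
  calc ∫⁻ ξ, (‖u ξ‖₊ : ℝ≥0∞)^(α+1) ≤ A'^(1-θ) * (∫⁻ ξ, (‖u ξ‖₊:ℝ≥0∞)^s)^θ := hHolder
    _ ≤ A'^(1-θ) * ((C:ℝ≥0∞)^s * G'^(s/2))^θ := by
        gcongr
    _ = (C:ℝ≥0∞)^(s*θ) * A'^((α+1-β)/2) * G'^(β/2) := by
        rw [ENNReal.mul_rpow_of_nonneg _ _ hθ0.le, ← ENNReal.rpow_mul, ← ENNReal.rpow_mul, hid2]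
        have : s/2*θ = β/2 := by rw [← hid1]; ring
        rw [this]
        ring

-- L¹ norm of gradient of ‖u‖² bounded via Cauchy-Schwarz
lemma gradL1 {d : ℕ} {u : EuclideanSpace ℝ (Fin d) → ℂ} (hu : ContDiff ℝ 1 u) :
    ∫⁻ ξ, (‖fderiv ℝ (fun y => ‖u y‖^2) ξ‖₊ : ℝ≥0∞)
      ≤ 4 * (∫⁻ ξ, (‖u ξ‖₊:ℝ≥0∞)^(2:ℝ))^(1/2:ℝ)
          * (∫⁻ ξ, (‖fderiv ℝ u ξ‖₊:ℝ≥0∞)^(2:ℝ))^(1/2:ℝ) := by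
  have hmu : Measurable u := hu.continuous.measurable
  have hmDu : Measurable (fderiv ℝ u) := (hu.continuous_fderiv one_ne_zero).measurable
  have step1 : ∫⁻ ξ, (‖fderiv ℝ (fun y => ‖u y‖^2) ξ‖₊ : ℝ≥0∞)
      ≤ ∫⁻ ξ, 4 * ((fun ξ => (‖u ξ‖₊:ℝ≥0∞)) * (fun ξ => (‖fderiv ℝ u ξ‖₊:ℝ≥0∞))) ξ := by
    apply lintegral_mono
    intro ξ
    simp only [Pi.mul_apply]
    rw [← enorm_eq_nnnorm, ← ofReal_norm, ← enorm_eq_nnnorm, ← ofReal_norm, ← enorm_eq_nnnorm, ← ofReal_norm]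
    calc ENNReal.ofReal ‖fderiv ℝ (fun y => ‖u y‖^2) ξ‖
        ≤ ENNReal.ofReal (4 * (‖u ξ‖ * ‖fderiv ℝ u ξ‖)) := by
          apply ENNReal.ofReal_le_ofReal
          have := normSq_fderiv_bound hu ξ
          linarith
      _ = 4 * (ENNReal.ofReal ‖u ξ‖ * ENNReal.ofReal ‖fderiv ℝ u ξ‖) := by
          rw [ENNReal.ofReal_mul (by norm_num), ENNReal.ofReal_mul (by positivity)]
          norm_num
  have step2 : ∫⁻ ξ, 4 * ((fun ξ => (‖u ξ‖₊:ℝ≥0∞)) * (fun ξ => (‖fderiv ℝ u ξ‖₊:ℝ≥0∞))) ξ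
      = 4 * ∫⁻ ξ, ((fun ξ => (‖u ξ‖₊:ℝ≥0∞)) * (fun ξ => (‖fderiv ℝ u ξ‖₊:ℝ≥0∞))) ξ := by
    apply lintegral_const_mul
    exact (hmu.nnnorm.coe_nnreal_ennreal).mul (hmDu.nnnorm.coe_nnreal_ennreal)
  have hconj : Real.HolderConjugate 2 2 := by rw [Real.holderConjugate_iff]; constructor <;> norm_num
  have step3 := ENNReal.lintegral_mul_le_Lp_mul_Lq (volume : Measure (EuclideanSpace ℝ (Fin d)))
    hconj (hmu.nnnorm.coe_nnreal_ennreal).aemeasurable (hmDu.nnnorm.coe_nnreal_ennreal).aemeasurable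
  calc ∫⁻ ξ, (‖fderiv ℝ (fun y => ‖u y‖^2) ξ‖₊ : ℝ≥0∞)
      ≤ 4 * ∫⁻ ξ, ((fun ξ => (‖u ξ‖₊:ℝ≥0∞)) * (fun ξ => (‖fderiv ℝ u ξ‖₊:ℝ≥0∞))) ξ := by
        rw [← step2]; exact step1
    _ ≤ 4 * ((∫⁻ ξ, (‖u ξ‖₊:ℝ≥0∞)^(2:ℝ))^(1/2:ℝ)
          * (∫⁻ ξ, (‖fderiv ℝ u ξ‖₊:ℝ≥0∞)^(2:ℝ))^(1/2:ℝ)) := by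
        gcongr
    _ = _ := by ring

lemma nnnorm_normSq_rpow (z : ℂ) :
    ((‖(‖z‖^2 : ℝ)‖₊ : ℝ≥0∞))^(2:ℝ) = (‖z‖₊:ℝ≥0∞)^(4:ℝ) := by
  have h1 : ‖(‖z‖^2 : ℝ)‖₊ = ‖z‖₊^2 := by
    rw [nnnorm_pow, nnnorm_norm]
  rw [h1, ENNReal.coe_pow, ← ENNReal.rpow_natCast ((‖z‖₊:ℝ≥0∞)) 2, ← ENNReal.rpow_mul]
  norm_num

-- Hölder interpolation for lintegrals of powers
lemma interp {d : ℕ} {u : EuclideanSpace ℝ (Fin d) → ℂ} (hmu : Measurable u)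
    {t s : ℝ} (h2t : 2 < t) (hts : t < s) :
    ∫⁻ ξ, (‖u ξ‖₊ : ℝ≥0∞)^t
      ≤ (∫⁻ ξ, (‖u ξ‖₊:ℝ≥0∞)^(2:ℝ))^(1-(t-2)/(s-2))
          * (∫⁻ ξ, (‖u ξ‖₊:ℝ≥0∞)^s)^((t-2)/(s-2)) := by
  set θ : ℝ := (t-2)/(s-2) with hθdef
  have hs2 : 2 < s := by linarith
  have hθ0 : 0 < θ := by apply div_pos <;> linarith
  have hθ1 : θ < 1 := by rw [hθdef, div_lt_one (by linarith)]; linarith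
  have h1θ : (1:ℝ) - θ ≠ 0 := by linarith
  have hθne : θ ≠ 0 := hθ0.ne'
  have hconj : Real.HolderConjugate (1/(1-θ)) (1/θ) := by
    rw [Real.holderConjugate_iff]; constructor
    · rw [lt_div_iff₀ (by linarith)]; linarith
    · simp only [one_div, inv_inv]; ring
  have hkey : θ*(s-2) = t-2 := by
    rw [hθdef]
    exact div_mul_cancel₀ _ (by linarith : s-2 ≠ 0)
  have hsθ : s * θ + 2*(1-θ) = t := by linear_combination hkey
  have hsplit : ∀ ξ, (‖u ξ‖₊ : ℝ≥0∞)^t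
      = ((fun ξ => (‖u ξ‖₊:ℝ≥0∞)^(2*(1-θ))) * (fun ξ => (‖u ξ‖₊:ℝ≥0∞)^(s*θ))) ξ := by
    intro ξ
    simp only [Pi.mul_apply]
    rw [← ENNReal.rpow_add_of_nonneg _ _ (by nlinarith) (by nlinarith)]
    congr 1
    linarith
  rw [lintegral_congr hsplit]
  have hH := ENNReal.lintegral_mul_le_Lp_mul_Lq (volume : Measure (EuclideanSpace ℝ (Fin d)))
    hconj (f := fun ξ => (‖u ξ‖₊:ℝ≥0∞)^(2*(1-θ))) (g := fun ξ => (‖u ξ‖₊:ℝ≥0∞)^(s*θ))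
    (by exact (hmu.nnnorm.coe_nnreal_ennreal.pow_const _).aemeasurable)
    (by exact (hmu.nnnorm.coe_nnreal_ennreal.pow_const _).aemeasurable)
  have e1 : (∫⁻ a : EuclideanSpace ℝ (Fin d),
      (fun ξ => (‖u ξ‖₊:ℝ≥0∞)^(2*(1-θ))) a ^ (1/(1-θ))) = ∫⁻ ξ, (‖u ξ‖₊:ℝ≥0∞)^(2:ℝ) := by
    have hexp : 2*(1-θ)*(1/(1-θ)) = 2 := by field_simp
    apply lintegral_congr; intro ξ
    rw [← ENNReal.rpow_mul, hexp]
  have e2 : (∫⁻ a : EuclideanSpace ℝ (Fin d),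
      (fun ξ => (‖u ξ‖₊:ℝ≥0∞)^(s*θ)) a ^ (1/θ)) = ∫⁻ ξ, (‖u ξ‖₊:ℝ≥0∞)^s := by
    have hexp : s*θ*(1/θ) = s := by field_simp
    apply lintegral_congr; intro ξ
    rw [← ENNReal.rpow_mul, hexp]
  rw [e1, e2, one_div_one_div, one_div_one_div] at hH
  exact hH

lemma core2 (α : ℝ) (hα : 1 < α) (hα' : α < 3) :
    ∃ K : ℝ≥0∞, K ≠ ⊤ ∧ ∀ u : EuclideanSpace ℝ (Fin 2) → ℂ,
      ContDiff ℝ 1 u → HasCompactSupport u →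
      ∫⁻ ξ, (‖u ξ‖₊ : ℝ≥0∞)^(α+1)
        ≤ K * (∫⁻ ξ, (‖u ξ‖₊:ℝ≥0∞)^(2:ℝ))
            * (∫⁻ ξ, (‖fderiv ℝ u ξ‖₊:ℝ≥0∞)^(2:ℝ))^((α-1)/2) := by
  set C₁ : ℝ≥0 := eLpNormLESNormFDerivOneConst (volume : Measure (EuclideanSpace ℝ (Fin 2))) (2:ℝ≥0) with hC₁def
  set θ : ℝ := (α-1)/2 with hθdef
  have hθ0 : 0 < θ := by rw [hθdef]; linarith
  have hθ1 : θ < 1 := by rw [hθdef]; linarith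
  refine ⟨((16:ℝ≥0∞) * (C₁:ℝ≥0∞)^(2:ℝ))^θ,
    ENNReal.rpow_ne_top_of_nonneg hθ0.le (ENNReal.mul_ne_top (by norm_num)
      (ENNReal.rpow_ne_top_of_nonneg (by norm_num) ENNReal.coe_ne_top)), fun u hu h2u => ?_⟩
  set A' : ℝ≥0∞ := ∫⁻ ξ, (‖u ξ‖₊:ℝ≥0∞)^(2:ℝ) with hA'def
  set G' : ℝ≥0∞ := ∫⁻ ξ, (‖fderiv ℝ u ξ‖₊:ℝ≥0∞)^(2:ℝ) with hG'def
  have hmu : Measurable u := hu.continuous.measurable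
  set v : EuclideanSpace ℝ (Fin 2) → ℝ := fun y => ‖u y‖^2 with hvdef
  have hv : ContDiff ℝ 1 v := normSq_contDiff hu
  have h2v : HasCompactSupport v := normSq_hcs h2u
  have hp : ((Module.finrank ℝ (EuclideanSpace ℝ (Fin 2)) : ℕ) : ℝ≥0).HolderConjugate 2 := by
    rw [finrank_euclideanSpace_fin]
    exact NNReal.holderConjugate_iff.mpr ⟨by norm_num, by rw [← NNReal.coe_inj]; push_cast; norm_num⟩
  have hSob1 : eLpNorm v 2 volume ≤ (C₁:ℝ≥0∞) * eLpNorm (fderiv ℝ v) 1 volume := by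
    have := eLpNorm_le_eLpNorm_fderiv_one (volume : Measure (EuclideanSpace ℝ (Fin 2))) hv h2v hp
    simpa [hC₁def] using this
  have h1 : eLpNorm v 2 volume ^ (2:ℝ) = ∫⁻ ξ, (‖v ξ‖₊:ℝ≥0∞)^(2:ℝ) := by
    have h := eLpNorm_nnreal_pow_eq_lintegral (f := v) (μ := volume) (p := 2) (by norm_num)
    convert h using 3 <;> norm_num <;> rfl
  have h2 : ∫⁻ ξ, (‖v ξ‖₊:ℝ≥0∞)^(2:ℝ) = ∫⁻ ξ, (‖u ξ‖₊:ℝ≥0∞)^(4:ℝ) :=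
    lintegral_congr fun ξ => nnnorm_normSq_rpow (u ξ)
  have hQ : ∫⁻ ξ, (‖u ξ‖₊:ℝ≥0∞)^(4:ℝ) ≤ 16 * (C₁:ℝ≥0∞)^(2:ℝ) * A' * G' := by
    calc ∫⁻ ξ, (‖u ξ‖₊:ℝ≥0∞)^(4:ℝ) = eLpNorm v 2 volume ^ (2:ℝ) := by rw [h1, h2]
      _ ≤ ((C₁:ℝ≥0∞) * eLpNorm (fderiv ℝ v) 1 volume)^(2:ℝ) :=
          ENNReal.rpow_le_rpow hSob1 (by norm_num)
      _ ≤ ((C₁:ℝ≥0∞) * (4 * A'^(1/2:ℝ) * G'^(1/2:ℝ)))^(2:ℝ) := by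
          apply ENNReal.rpow_le_rpow _ (by norm_num)
          gcongr
          rw [eLpNorm_one_eq_lintegral_enorm]
          exact gradL1 hu
      _ = 16 * (C₁:ℝ≥0∞)^(2:ℝ) * A' * G' := by
          rw [ENNReal.mul_rpow_of_nonneg _ _ (by norm_num : (0:ℝ) ≤ 2),
            ENNReal.mul_rpow_of_nonneg _ _ (by norm_num : (0:ℝ) ≤ 2),
            ENNReal.mul_rpow_of_nonneg _ _ (by norm_num : (0:ℝ) ≤ 2),
            ← ENNReal.rpow_mul, ← ENNReal.rpow_mul]
          norm_num
          ring
  have hint := interp (d := 2) hmu (t := α+1) (s := 4) (by linarith) (by linarith)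
  have hθeq : (α+1-2)/(4-2:ℝ) = θ := by rw [hθdef]; ring_nf
  rw [hθeq] at hint
  calc ∫⁻ ξ, (‖u ξ‖₊ : ℝ≥0∞)^(α+1) ≤ A'^(1-θ) * (∫⁻ ξ, (‖u ξ‖₊:ℝ≥0∞)^(4:ℝ))^θ := hint
    _ ≤ A'^(1-θ) * (16 * (C₁:ℝ≥0∞)^(2:ℝ) * A' * G')^θ := by gcongr
    _ = ((16:ℝ≥0∞) * (C₁:ℝ≥0∞)^(2:ℝ))^θ * (A'^(1-θ) * A'^θ) * G'^θ := by
        rw [ENNReal.mul_rpow_of_nonneg _ _ hθ0.le, ENNReal.mul_rpow_of_nonneg _ _ hθ0.le]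
        ring
    _ = ((16:ℝ≥0∞) * (C₁:ℝ≥0∞)^(2:ℝ))^θ * A' * G'^θ := by
        rw [← ENNReal.rpow_add_of_nonneg (1-θ) θ (by linarith) hθ0.le, sub_add_cancel,
          ENNReal.rpow_one]
    _ = _ := by rw [hθdef]

lemma ftc_bound {w : ℝ → ℝ} (hw : ContDiff ℝ 1 w) (h2w : HasCompactSupport w) (t : ℝ) :
    |w t| ≤ ∫ s, |deriv w s| := by
  have hderiv : Continuous (deriv w) := hw.continuous_deriv le_rfl
  have hint : Integrable (deriv w) := hderiv.integrable_of_hasCompactSupport h2w.deriv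
  obtain ⟨R, hR⟩ := h2w.isBounded.subset_closedBall 0
  set a : ℝ := -(|R| + |t| + 1) with hadef
  have hat : a ≤ t := by
    rw [hadef]
    linarith [neg_abs_le t, abs_nonneg R]
  have hwa : w a = 0 := by
    apply image_eq_zero_of_notMem_tsupport
    intro hmem
    have h' := hR hmem
    simp only [Metric.mem_closedBall, Real.dist_eq, sub_zero, hadef] at h'
    rw [abs_of_nonpos (by linarith [abs_nonneg R, abs_nonneg t] : -(|R|+|t|+1) ≤ 0)] at h'
    linarith [le_abs_self R, abs_nonneg t]
  have hftc : ∫ s in a..t, deriv w s = w t - w a :=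
    intervalIntegral.integral_deriv_eq_sub
      (fun x _ => (hw.differentiable one_ne_zero).differentiableAt) hint.intervalIntegrable
  calc |w t| = |∫ s in a..t, deriv w s| := by rw [hftc, hwa, sub_zero]
    _ ≤ ∫ s in a..t, |deriv w s| := intervalIntegral.abs_integral_le_integral_abs hat
    _ = ∫ s in Set.Ioc a t, |deriv w s| := by
        rw [intervalIntegral.integral_of_le hat]
    _ ≤ ∫ s, |deriv w s| := setIntegral_le_integral hint.abs
        (Filter.Eventually.of_forall fun s => abs_nonneg _)


lemma sup_bound1 {u : EuclideanSpace ℝ (Fin 1) → ℂ} (hu : ContDiff ℝ 1 u)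
    (h2u : HasCompactSupport u) (x : EuclideanSpace ℝ (Fin 1)) :
    (‖u x‖₊ : ℝ≥0∞)^(2:ℝ) ≤ ∫⁻ ξ, (‖fderiv ℝ (fun y => ‖u y‖^2) ξ‖₊ : ℝ≥0∞) := by
  set v : EuclideanSpace ℝ (Fin 1) → ℝ := fun y => ‖u y‖^2 with hvdef
  have hv : ContDiff ℝ 1 v := normSq_contDiff hu
  have h2v : HasCompactSupport v := normSq_hcs h2u
  set c : EuclideanSpace ℝ (Fin 1) := EuclideanSpace.single 0 (1:ℝ) with hcdef
  set L : ℝ → EuclideanSpace ℝ (Fin 1) := fun t => t • c with hLdef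
  have hL_apply : ∀ t (i : Fin 1), L t i = t := by
    intro t i
    rw [hLdef]
    simp only [PiLp.smul_apply, hcdef]
    rw [Subsingleton.elim i 0]
    simp [EuclideanSpace.single_apply]
  have hnc : ‖c‖ = 1 := by rw [hcdef, EuclideanSpace.norm_single]; norm_num
  have hisoL : Isometry L := by
    apply Isometry.of_dist_eq
    intro t t'
    rw [dist_eq_norm, hLdef]
    dsimp only
    rw [← sub_smul, norm_smul, hnc, mul_one, Real.norm_eq_abs, Real.dist_eq]
  set me : ℝ ≃ᵐ EuclideanSpace ℝ (Fin 1) :=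
    (MeasurableEquiv.funUnique (Fin 1) ℝ).symm.trans
      (MeasurableEquiv.toLp 2 (Fin 1 → ℝ)) with hmedef
  have hme : MeasurePreserving (⇑me) volume volume := by
    have hcoe : ⇑me = ⇑(MeasurableEquiv.toLp 2 (Fin 1 → ℝ)) ∘
        ⇑(MeasurableEquiv.funUnique (Fin 1) ℝ).symm := rfl
    rw [hcoe]
    exact ((EuclideanSpace.volume_preserving_symm_measurableEquiv_toLp (Fin 1)).symm _).comp
      ((volume_preserving_funUnique (Fin 1) ℝ).symm _)
  have hmeL : ⇑me = L := by
    funext t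
    ext i
    rw [hL_apply t i]
    rfl
  set w : ℝ → ℝ := fun t => v (L t) with hwdef
  have hsmul : ContDiff ℝ 1 L := by
    rw [hLdef]
    exact contDiff_id.smul contDiff_const
  have hwC : ContDiff ℝ 1 w := hv.comp hsmul
  have h2w : HasCompactSupport w := h2v.comp_isClosedEmbedding hisoL.isClosedEmbedding
  have hDw : ∀ t, |deriv w t| ≤ ‖fderiv ℝ v (L t)‖ := by
    intro t
    have hLd : HasDerivAt L c t := by
      have := (hasDerivAt_id t).smul_const c
      simpa using this
    have hvd : HasFDerivAt v (fderiv ℝ v (L t)) (L t) :=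
      ((hv.differentiable one_ne_zero) (L t)).hasFDerivAt
    have hwd : HasDerivAt w (fderiv ℝ v (L t) c) t := hvd.comp_hasDerivAt t hLd
    rw [hwd.deriv, ← Real.norm_eq_abs]
    calc ‖fderiv ℝ v (L t) c‖ ≤ ‖fderiv ℝ v (L t)‖ * ‖c‖ := (fderiv ℝ v (L t)).le_opNorm c
      _ = ‖fderiv ℝ v (L t)‖ := by rw [hnc, mul_one]
  have hcontDv : Continuous (fderiv ℝ v) := hv.continuous_fderiv one_ne_zero
  have hcsDv : HasCompactSupport (fderiv ℝ v) := h2v.fderiv ℝ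
  have hIntDv : Integrable (fun ξ => ‖fderiv ℝ v ξ‖) :=
    hcontDv.norm.integrable_of_hasCompactSupport hcsDv.norm
  have hIntRHS : Integrable (fun s => ‖fderiv ℝ v (L s)‖) := by
    apply Continuous.integrable_of_hasCompactSupport
    · exact (hcontDv.comp hisoL.continuous).norm
    · exact (hcsDv.norm).comp_isClosedEmbedding hisoL.isClosedEmbedding
  have hIntDw : Integrable (fun s => |deriv w s|) :=
    ((hwC.continuous_deriv le_rfl).abs).integrable_of_hasCompactSupport h2w.deriv.abs
  have hreal : w (x 0) ≤ ∫ ξ, ‖fderiv ℝ v ξ‖ := by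
    calc w (x 0) ≤ |w (x 0)| := le_abs_self _
      _ ≤ ∫ s, |deriv w s| := ftc_bound hwC h2w _
      _ ≤ ∫ s, ‖fderiv ℝ v (L s)‖ := integral_mono hIntDw hIntRHS hDw
      _ = ∫ ξ, ‖fderiv ℝ v ξ‖ := by
          rw [← hmeL]
          exact hme.integral_comp me.measurableEmbedding (fun ξ => ‖fderiv ℝ v ξ‖)
  have hLx : L (x 0) = x := by
    ext i
    rw [hL_apply]
    rw [Subsingleton.elim i 0]
  have hwx : w (x 0) = ‖u x‖^2 := by rw [hwdef]; dsimp only; rw [hLx]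
  calc (‖u x‖₊ : ℝ≥0∞)^(2:ℝ) = ENNReal.ofReal (‖u x‖^2) := by
        rw [← enorm_eq_nnnorm, ← ofReal_norm, ENNReal.ofReal_rpow_of_nonneg (norm_nonneg _) (by norm_num)]
        norm_num
    _ ≤ ENNReal.ofReal (∫ ξ, ‖fderiv ℝ v ξ‖) := by
        apply ENNReal.ofReal_le_ofReal
        rw [← hwx]
        exact hreal
    _ = ∫⁻ ξ, (‖fderiv ℝ v ξ‖₊ : ℝ≥0∞) := by
        rw [ofReal_integral_eq_lintegral_ofReal hIntDv
          (Filter.Eventually.of_forall fun ξ => norm_nonneg _)]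
        apply lintegral_congr
        intro ξ
        rw [ofReal_norm, enorm_eq_nnnorm]


lemma core1 (α : ℝ) (hα : 1 < α) (hα' : α < 5) :
    ∃ K : ℝ≥0∞, K ≠ ⊤ ∧ ∀ u : EuclideanSpace ℝ (Fin 1) → ℂ,
      ContDiff ℝ 1 u → HasCompactSupport u →
      ∫⁻ ξ, (‖u ξ‖₊ : ℝ≥0∞)^(α+1)
        ≤ K * (∫⁻ ξ, (‖u ξ‖₊:ℝ≥0∞)^(2:ℝ))^(1+(α-1)/4)
            * (∫⁻ ξ, (‖fderiv ℝ u ξ‖₊:ℝ≥0∞)^(2:ℝ))^((α-1)/4) := by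
  set θ : ℝ := (α-1)/2 with hθdef
  have hθ0 : 0 < θ := by rw [hθdef]; linarith
  refine ⟨(4:ℝ≥0∞)^θ, ENNReal.rpow_ne_top_of_nonneg hθ0.le (by norm_num),
    fun u hu h2u => ?_⟩
  set A' : ℝ≥0∞ := ∫⁻ ξ, (‖u ξ‖₊:ℝ≥0∞)^(2:ℝ) with hA'def
  set G' : ℝ≥0∞ := ∫⁻ ξ, (‖fderiv ℝ u ξ‖₊:ℝ≥0∞)^(2:ℝ) with hG'def
  set M : ℝ≥0∞ := ∫⁻ ξ, (‖fderiv ℝ (fun y => ‖u y‖^2) ξ‖₊ : ℝ≥0∞) with hMdef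
  have hmu : Measurable u := hu.continuous.measurable
  have hpt : ∀ ξ, (‖u ξ‖₊:ℝ≥0∞)^(α+1) ≤ M^θ * (‖u ξ‖₊:ℝ≥0∞)^(2:ℝ) := by
    intro ξ
    have hx2 : (‖u ξ‖₊:ℝ≥0∞)^(α+1)
        = ((‖u ξ‖₊:ℝ≥0∞)^(2:ℝ))^θ * (‖u ξ‖₊:ℝ≥0∞)^(2:ℝ) := by
      rw [← ENNReal.rpow_mul, ← ENNReal.rpow_add_of_nonneg _ _ (by nlinarith) (by norm_num)]
      congr 1
      rw [hθdef]
      ring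
    rw [hx2]
    exact mul_le_mul_left (ENNReal.rpow_le_rpow (sup_bound1 hu h2u ξ) hθ0.le) _
  have step1 : ∫⁻ ξ, (‖u ξ‖₊ : ℝ≥0∞)^(α+1) ≤ M^θ * A' := by
    calc ∫⁻ ξ, (‖u ξ‖₊ : ℝ≥0∞)^(α+1) ≤ ∫⁻ ξ, M^θ * (‖u ξ‖₊:ℝ≥0∞)^(2:ℝ) := lintegral_mono hpt
      _ = M^θ * A' := lintegral_const_mul _ (hmu.nnnorm.coe_nnreal_ennreal.pow_const _)
  have step2 : M ≤ 4 * A'^(1/2:ℝ) * G'^(1/2:ℝ) := gradL1 hu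
  calc ∫⁻ ξ, (‖u ξ‖₊ : ℝ≥0∞)^(α+1) ≤ M^θ * A' := step1
    _ ≤ (4 * A'^(1/2:ℝ) * G'^(1/2:ℝ))^θ * A' := by
        exact mul_le_mul_left (ENNReal.rpow_le_rpow step2 hθ0.le) _
    _ = (4:ℝ≥0∞)^θ * (A'^(θ/2) * A'^(1:ℝ)) * G'^(θ/2) := by
        rw [ENNReal.mul_rpow_of_nonneg _ _ hθ0.le, ENNReal.mul_rpow_of_nonneg _ _ hθ0.le,
          ← ENNReal.rpow_mul, ← ENNReal.rpow_mul, ENNReal.rpow_one]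
        have e : 1/2*θ = θ/2 := by ring
        rw [e]
        ring
    _ = (4:ℝ≥0∞)^θ * A'^(1+(α-1)/4) * G'^((α-1)/4) := by
        rw [← ENNReal.rpow_add_of_nonneg _ _ (by positivity) (by norm_num)]
        have e1 : θ/2 + 1 = 1+(α-1)/4 := by rw [hθdef]; ring
        have e2 : θ/2 = (α-1)/4 := by rw [hθdef]; ring
        rw [e1, e2]


lemma core (d : ℕ) (hd : 1 ≤ d) (α : ℝ) (hα : 1 < α) (hα' : α < 1 + 4 / (d:ℝ)) :
    ∃ K : ℝ≥0∞, K ≠ ⊤ ∧ ∀ u : EuclideanSpace ℝ (Fin d) → ℂ,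
      ContDiff ℝ 1 u → HasCompactSupport u →
      ∫⁻ ξ, (‖u ξ‖₊ : ℝ≥0∞)^(α+1)
        ≤ K * (∫⁻ ξ, (‖u ξ‖₊:ℝ≥0∞)^(2:ℝ))^((α+1-(d:ℝ)*(α-1)/2)/2)
            * (∫⁻ ξ, (‖fderiv ℝ u ξ‖₊:ℝ≥0∞)^(2:ℝ))^(((d:ℝ)*(α-1)/2)/2) := by
  rcases Nat.lt_or_ge d 3 with h3 | h3
  · interval_cases d
    · -- d = 1
      have hα5 : α < 5 := by norm_num at hα'; linarith
      obtain ⟨K, hK, h⟩ := core1 α hα hα5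
      refine ⟨K, hK, fun u hu h2u => ?_⟩
      have e1 : (α+1-((1:ℕ):ℝ)*(α-1)/2)/2 = 1+(α-1)/4 := by push_cast; ring
      have e2 : (((1:ℕ):ℝ)*(α-1)/2)/2 = (α-1)/4 := by push_cast; ring
      rw [e1, e2]
      exact h u hu h2u
    · -- d = 2
      have hα3 : α < 3 := by norm_num at hα'; linarith
      obtain ⟨K, hK, h⟩ := core2 α hα hα3
      refine ⟨K, hK, fun u hu h2u => ?_⟩
      have e1 : (α+1-((2:ℕ):ℝ)*(α-1)/2)/2 = 1 := by push_cast; ring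
      have e2 : (((2:ℕ):ℝ)*(α-1)/2)/2 = (α-1)/2 := by push_cast; ring
      rw [e1, e2, ENNReal.rpow_one]
      exact h u hu h2u
  · exact core3 d h3 α hα hα'

/-- Gagliardo–Nirenberg/Young estimate (Lemma `G-N` in the paper): for `1 < α < 1 + 4/d`
there is `p > 2` such that for every `ε > 0` there is a finite constant `C_ε` with
`∫ |u|^{α+1} ≤ C_ε (∫ |u|²)^{p/2} + ε ∫ |∇u|²` for all smooth compactly supported `u`. -/
theorem stmt1 (d : ℕ) (hd : 1 ≤ d) (α : ℝ) (hα : 1 < α) (hα' : α < 1 + 4 / (d : ℝ)) :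
    ∃ p : ℝ, 2 < p ∧
      ∀ ε : ℝ, 0 < ε → ∃ C : ℝ, 0 ≤ C ∧
        ∀ u : EuclideanSpace ℝ (Fin d) → ℂ,
          ContDiff ℝ (⊤ : ℕ∞) u → HasCompactSupport u →
          ∫ ξ, ‖u ξ‖ ^ (α + 1)
            ≤ C * (∫ ξ, ‖u ξ‖ ^ (2 : ℝ)) ^ (p / 2)
              + ε * ∫ ξ, ∑ k : Fin d, ‖fderiv ℝ u ξ (EuclideanSpace.single k 1)‖ ^ (2 : ℝ) := by
  have hd0 : (0:ℝ) < d := by exact_mod_cast hd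
  set β : ℝ := (d:ℝ)*(α-1)/2 with hβdef
  have hβ0 : 0 < β := by rw [hβdef]; apply div_pos (mul_pos hd0 (by linarith)); norm_num
  have hβ2 : β < 2 := by
    have h1 : α - 1 < 4/(d:ℝ) := by linarith
    have h2 : (d:ℝ)*(α-1) < (d:ℝ)*(4/(d:ℝ)) := by
      exact mul_lt_mul_of_pos_left h1 hd0
    have h3 : (d:ℝ)*(4/(d:ℝ)) = 4 := by field_simp
    rw [hβdef]
    linarith
  set a : ℝ := α+1-β with hadef
  have ha : 2-β < a := by rw [hadef]; linarith
  set p : ℝ := 2*a/(2-β) with hpdef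
  have hp2 : 2 < p := by
    rw [hpdef, lt_div_iff₀ (by linarith)]
    linarith
  obtain ⟨K, hKtop, hcore⟩ := core d hd α hα hα'
  refine ⟨p, hp2, fun ε hε => ?_⟩
  obtain ⟨C, hC0, hyoung⟩ := young_aux (a := a) hβ0 hβ2 (ENNReal.toReal_nonneg (a := K)) hε
  refine ⟨C, hC0, fun u hu h2u => ?_⟩
  have hu1 : ContDiff ℝ 1 u := hu.of_le (by simp)
  have hcu : Continuous u := hu1.continuous
  have hcDu : Continuous (fderiv ℝ u) := hu1.continuous_fderiv one_ne_zero
  have hcsDu : HasCompactSupport (fderiv ℝ u) := h2u.fderiv ℝ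
  -- real quantities
  set A : ℝ := ∫ ξ, ‖u ξ‖^(2:ℝ) with hAdef
  set G : ℝ := ∫ ξ, ∑ k : Fin d, ‖fderiv ℝ u ξ (EuclideanSpace.single k 1)‖^(2:ℝ) with hGdef
  set J : ℝ := ∫ ξ, ‖u ξ‖^(α+1) with hJdef
  -- integrability
  have hIntA : Integrable (fun ξ => ‖u ξ‖^(2:ℝ)) := by
    apply Continuous.integrable_of_hasCompactSupport
    · exact hcu.norm.rpow_const (fun x => Or.inr (by norm_num))
    · exact HasCompactSupport.comp_left (g := fun z : ℂ => ‖z‖^(2:ℝ)) h2u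
        (by simp [Real.zero_rpow])
  have hIntJ : Integrable (fun ξ => ‖u ξ‖^(α+1)) := by
    apply Continuous.integrable_of_hasCompactSupport
    · exact hcu.norm.rpow_const (fun x => Or.inr (by linarith))
    · exact HasCompactSupport.comp_left (g := fun z : ℂ => ‖z‖^(α+1)) h2u
        (by simp [Real.zero_rpow (by linarith : α+1 ≠ 0)])
  have hIntG : Integrable
      (fun ξ => ∑ k : Fin d, ‖fderiv ℝ u ξ (EuclideanSpace.single k 1)‖^(2:ℝ)) := by
    apply Continuous.integrable_of_hasCompactSupport
    · apply continuous_finset_sum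
      intro k _
      exact ((hcDu.clm_apply continuous_const).norm).rpow_const (fun x => Or.inr (by norm_num))
    · apply HasCompactSupport.intro hcsDu
      intro x hx
      have h0 : fderiv ℝ u x = 0 := image_eq_zero_of_notMem_tsupport hx
      rw [h0]
      simp [Real.zero_rpow]
  -- nonnegativity
  have hA0 : 0 ≤ A := integral_nonneg fun ξ => Real.rpow_nonneg (norm_nonneg _) _
  have hG0 : 0 ≤ G := integral_nonneg fun ξ =>
    Finset.sum_nonneg fun k _ => Real.rpow_nonneg (norm_nonneg _) _
  have hJ0 : 0 ≤ J := integral_nonneg fun ξ => Real.rpow_nonneg (norm_nonneg _) _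
  -- identifications
  have hAeq : ∫⁻ ξ, (‖u ξ‖₊:ℝ≥0∞)^(2:ℝ) = ENNReal.ofReal A := by
    rw [hAdef, ofReal_integral_eq_lintegral_ofReal hIntA
      (Filter.Eventually.of_forall fun ξ => Real.rpow_nonneg (norm_nonneg _) _)]
    apply lintegral_congr
    intro ξ
    rw [← ENNReal.ofReal_rpow_of_nonneg (norm_nonneg _) (by norm_num),
      ofReal_norm, enorm_eq_nnnorm]
  have hJeq : ∫⁻ ξ, (‖u ξ‖₊:ℝ≥0∞)^(α+1) = ENNReal.ofReal J := by
    rw [hJdef, ofReal_integral_eq_lintegral_ofReal hIntJ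
      (Filter.Eventually.of_forall fun ξ => Real.rpow_nonneg (norm_nonneg _) _)]
    apply lintegral_congr
    intro ξ
    rw [← ENNReal.ofReal_rpow_of_nonneg (norm_nonneg _) (by linarith),
      ofReal_norm, enorm_eq_nnnorm]
  have hGineq : ∫⁻ ξ, (‖fderiv ℝ u ξ‖₊:ℝ≥0∞)^(2:ℝ) ≤ ENNReal.ofReal G := by
    rw [hGdef, ofReal_integral_eq_lintegral_ofReal hIntG
      (Filter.Eventually.of_forall fun ξ =>
        Finset.sum_nonneg fun k _ => Real.rpow_nonneg (norm_nonneg _) _)]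
    apply lintegral_mono
    intro ξ
    dsimp only
    rw [← enorm_eq_nnnorm, ← ofReal_norm, ENNReal.ofReal_rpow_of_nonneg (norm_nonneg _) (by norm_num)]
    apply ENNReal.ofReal_le_ofReal
    have h1 : ‖fderiv ℝ u ξ‖^(2:ℝ) = ‖fderiv ℝ u ξ‖^(2:ℕ) := by
      rw [← Real.rpow_natCast]; norm_num
    have h2 : ∀ k : Fin d, ‖fderiv ℝ u ξ (EuclideanSpace.single k 1)‖^(2:ℝ)
        = ‖fderiv ℝ u ξ (EuclideanSpace.single k 1)‖^(2:ℕ) := fun k => by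
      rw [← Real.rpow_natCast]; norm_num
    rw [h1]
    calc ‖fderiv ℝ u ξ‖^(2:ℕ) ≤ ∑ k : Fin d, ‖fderiv ℝ u ξ (EuclideanSpace.single k 1)‖^(2:ℕ) :=
          opnorm_sq_le (fderiv ℝ u ξ)
      _ = ∑ k : Fin d, ‖fderiv ℝ u ξ (EuclideanSpace.single k 1)‖^(2:ℝ) := by
          apply Finset.sum_congr rfl
          intro k _
          rw [h2 k]
  -- main chain in ℝ≥0∞
  have hmain := hcore u hu1 h2u
  rw [hJeq, hAeq] at hmain
  have hexpa : (α+1-(d:ℝ)*(α-1)/2)/2 = a/2 := by rw [hadef, hβdef]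
  have hexpb : ((d:ℝ)*(α-1)/2)/2 = β/2 := by rw [hβdef]
  rw [hexpa, hexpb] at hmain
  have hchain : ENNReal.ofReal J ≤ ENNReal.ofReal (K.toReal * A^(a/2) * G^(β/2)) := by
    calc ENNReal.ofReal J
        ≤ K * (ENNReal.ofReal A)^(a/2) * (∫⁻ ξ, (‖fderiv ℝ u ξ‖₊:ℝ≥0∞)^(2:ℝ))^(β/2) := hmain
      _ ≤ K * (ENNReal.ofReal A)^(a/2) * (ENNReal.ofReal G)^(β/2) := by
          gcongr
      _ = ENNReal.ofReal (K.toReal * A^(a/2) * G^(β/2)) := by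
          rw [← ENNReal.ofReal_toReal hKtop]
          rw [ENNReal.ofReal_rpow_of_nonneg hA0 (by linarith : (0:ℝ) ≤ a/2),
            ENNReal.ofReal_rpow_of_nonneg hG0 (by linarith : (0:ℝ) ≤ β/2)]
          rw [← ENNReal.ofReal_mul ENNReal.toReal_nonneg,
            ← ENNReal.ofReal_mul (mul_nonneg ENNReal.toReal_nonneg (Real.rpow_nonneg hA0 _))]
          rw [ENNReal.ofReal_toReal hKtop]
  have hreal : J ≤ K.toReal * A^(a/2) * G^(β/2) := by
    have := (ENNReal.ofReal_le_ofReal_iff (mul_nonneg (mul_nonneg ENNReal.toReal_nonneg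
      (Real.rpow_nonneg hA0 _)) (Real.rpow_nonneg hG0 _))).mp hchain
    exact this
  have hfin := hyoung A G hA0 hG0
  have hpexp : a/(2-β) = p/2 := by rw [hpdef]; ring
  rw [hpexp] at hfin
  calc J ≤ K.toReal * A^(a/2) * G^(β/2) := hreal
    _ ≤ C * A^(p/2) + ε * G := hfin
end

section
/- Let α > 1 and define g_α : ℂ → ℂ by g_α(z) = |z|^{α−1} z (with g_α(0) = 0). Then g_α is differentiable over ℝ (viewing ℂ as the real normed space ℝ²) at every point z ∈ ℂ; at z = 0 its real Fréchet derivative is 0, and at z ≠ 0 its real Fréchet derivative is the real-linear map h ↦ ((α+1)/2) |z|^{α−1} h + ((α−1)/2) |z|^{α−3} z² · conj(h). -/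
/-!
Write `p = α - 1 > 0` and `g(w) = ‖w‖ ^ p • w`. At `0`, `‖g w‖ = ‖w‖ ^ p * ‖w‖ = o(‖w‖)`, so the
derivative vanishes. Away from `0`, `‖w‖ ^ p = (‖w‖ ^ 2) ^ (p / 2)` is smooth with derivative
`p ‖z‖ ^ (p - 2) ⟪z, ·⟫`, and the product rule gives
`g'(z) h = ‖z‖ ^ p h + p ‖z‖ ^ (p - 2) ⟪z, h⟫ z`. On `ℂ`, `2 ⟪z, h⟫ z = ‖z‖ ^ 2 h + z ^ 2 conj h`,
which splits this into the complex-linear and conjugate-linear parts of the statement.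
-/

open Asymptotics Filter Topology ComplexConjugate

theorem hasFDerivAt_norm_rpow_smul_self_zero {E : Type*} [NormedAddCommGroup E]
    [NormedSpace ℝ E] {p : ℝ} (hp : 0 < p) :
    HasFDerivAt (fun w : E ↦ ‖w‖ ^ p • w) (0 : E →L[ℝ] E) 0 := by
  have hpow : Tendsto (fun w : E ↦ ‖w‖ ^ p) (𝓝 0) (𝓝 0) := by
    simpa [hp.ne'] using (continuous_norm.rpow_const fun _ ↦ .inr hp.le).tendsto (0 : E)
  refine .of_isLittleO <| isLittleO_norm_left.1 <| isLittleO_norm_right.1 ?_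
  simpa [norm_smul, Real.zero_rpow hp.ne', abs_of_nonneg (Real.rpow_nonneg (norm_nonneg _) _)]
    using ((isLittleO_one_iff ℝ).2 hpow).mul_isBigO (isBigO_refl (fun w : E ↦ ‖w‖) (𝓝 0))

section InnerProductSpace

variable {E : Type*} [NormedAddCommGroup E] [InnerProductSpace ℝ E]

theorem hasStrictFDerivAt_norm_rpow_of_ne_zero {x : E} (hx : x ≠ 0) (p : ℝ) :
    HasStrictFDerivAt (fun w : E ↦ ‖w‖ ^ p) ((p * ‖x‖ ^ (p - 2)) • innerSL ℝ x) x := by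
  have hsq : ∀ w : E, (‖w‖ ^ 2) ^ (p / 2) = ‖w‖ ^ p := fun w ↦ by
    rw [← Real.rpow_natCast_mul (norm_nonneg w)]; ring_nf
  have hd := (hasStrictFDerivAt_norm_sq x).rpow_const (p := p / 2) (.inl (by simpa using hx))
  simp only [hsq] at hd
  convert hd using 1
  rw [← Nat.cast_smul_eq_nsmul ℝ, smul_smul, ← Real.rpow_natCast_mul (norm_nonneg x)]
  ring_nf

theorem hasFDerivAt_norm_rpow_smul_self_of_ne_zero {x : E} (hx : x ≠ 0) (p : ℝ) :
    HasFDerivAt (fun w : E ↦ ‖w‖ ^ p • w)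
      (‖x‖ ^ p • ContinuousLinearMap.id ℝ E
        + ((p * ‖x‖ ^ (p - 2)) • innerSL ℝ x).smulRight x) x :=
  (hasStrictFDerivAt_norm_rpow_of_ne_zero hx p).hasFDerivAt.smul (hasFDerivAt_id x)

theorem differentiable_norm_rpow_smul_self {p : ℝ} (hp : 0 < p) :
    Differentiable ℝ (fun w : E ↦ ‖w‖ ^ p • w) := fun x ↦ by
  rcases eq_or_ne x 0 with rfl | hx
  · exact (hasFDerivAt_norm_rpow_smul_self_zero hp).differentiableAt
  · exact (hasFDerivAt_norm_rpow_smul_self_of_ne_zero hx p).differentiableAt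

end InnerProductSpace

namespace Complex

theorem ofReal_inner_mul_self (z h : ℂ) :
    (inner ℝ z h : ℂ) * z = (‖z‖ ^ 2 * h + z ^ 2 * conj h) / 2 := by
  rw [Complex.inner, re_eq_add_conj, ← mul_conj']
  simp only [map_mul, RingHomCompTriple.comp_apply, RingHom.id_apply]
  ring

theorem fderiv_ofReal_norm_rpow_mul_self_apply {z : ℂ} (hz : z ≠ 0) (p : ℝ) (h : ℂ) :
    fderiv ℝ (fun w : ℂ ↦ ((‖w‖ ^ p : ℝ) : ℂ) * w) z h
      = (((p + 2) / 2 * ‖z‖ ^ p : ℝ) : ℂ) * h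
        + ((p / 2 * ‖z‖ ^ (p - 2) : ℝ) : ℂ) * z ^ 2 * conj h := by
  change fderiv ℝ (fun w : ℂ ↦ ‖w‖ ^ p • w) z h = _
  have hpow : ((‖z‖ ^ (p - 2) : ℝ) : ℂ) * (‖z‖ : ℂ) ^ 2 = ((‖z‖ ^ p : ℝ) : ℂ) := by
    rw [← ofReal_pow, ← ofReal_mul, ← Real.rpow_natCast, ← Real.rpow_add (norm_pos_iff.2 hz)]
    norm_num
  rw [(hasFDerivAt_norm_rpow_smul_self_of_ne_zero hz p).fderiv]
  simp only [add_apply, smul_apply, smul_eq_mul, ContinuousLinearMap.id_apply,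
    ContinuousLinearMap.smulRight_apply, coe_innerSL_apply, real_smul, ofReal_mul, ofReal_add,
    ofReal_div, ofReal_ofNat]
  rw [mul_assoc _ _ z, ofReal_inner_mul_self]
  linear_combination (p / 2 * h : ℂ) * hpow

end Complex

/-- Real (Fréchet) differentiability of the power nonlinearity `g_α(z) = |z|^{α−1} z`
(`α > 1`), viewing `ℂ` as a real normed space: `g_α` is differentiable over `ℝ`
everywhere, its derivative at `0` is `0`, and at `z ≠ 0` its derivative is
`h ↦ ((α+1)/2) |z|^{α−1} h + ((α−1)/2) |z|^{α−3} z² conj(h)`. -/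
theorem stmt8 (α : ℝ) (hα : 1 < α) :
    (∀ z : ℂ, DifferentiableAt ℝ
        (fun w : ℂ => ((‖w‖ ^ (α - 1) : ℝ) : ℂ) * w) z) ∧
    fderiv ℝ (fun w : ℂ => ((‖w‖ ^ (α - 1) : ℝ) : ℂ) * w) 0 = 0 ∧
    ∀ z : ℂ, z ≠ 0 → ∀ h : ℂ,
      fderiv ℝ (fun w : ℂ => ((‖w‖ ^ (α - 1) : ℝ) : ℂ) * w) z h
        = (((α + 1) / 2 * ‖z‖ ^ (α - 1) : ℝ) : ℂ) * h
          + (((α - 1) / 2 * ‖z‖ ^ (α - 3) : ℝ) : ℂ) * z ^ 2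
            * (starRingEnd ℂ) h := by
  have hp : 0 < α - 1 := sub_pos.2 hα
  refine ⟨differentiable_norm_rpow_smul_self hp, (hasFDerivAt_norm_rpow_smul_self_zero hp).fderiv,
    fun z hz h ↦ ?_⟩
  rw [Complex.fderiv_ofReal_norm_rpow_mul_self_apply hz, show α - 1 + 2 = α + 1 by ring,
    show α - 1 - 2 = α - 3 by ring]
end
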